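/- arXiv:0901.1395 — 3 statements merged into one kernel-verified Lean document; each statement's English description precedes it below -/
import Mathlib

section
/- Let 𝔤 be a finite-dimensional simple Lie algebra over an algebraically closed field of characteristic 0, and let σ: 𝔤→𝔤 be a linear map satisfying [σ(x),x]=0 for all x∈𝔤. Then σ is a scalar multiple of the identity. -/
/-!
Polarizing `⁅σ x, x⁆ = 0` gives `⁅σ x, y⁆ = ⁅x, σ y⁆`, i.e. `ad (σ x) = ad x ∘ σ`. As `ad` is
traceless on a simple Lie algebra, this makes `σ` self-adjoint for the Killing form, and then
invariance and nondegeneracy of the Killing form (Cartan's criterion) upgrade the identity to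
`σ ⁅x, y⁆ = ⁅x, σ y⁆`. So `σ` is an endomorphism of the irreducible adjoint module, and Schur's
lemma makes it a scalar.
-/

open LinearMap

namespace LieAlgebra

section

variable {R L : Type*} [CommRing R] [LieRing L] [LieAlgebra R L]

theorem lie_map_eq_lie_map_of_lie_map_self_eq_zero (τ : L →ₗ[R] L)
    (h : ∀ x, ⁅τ x, x⁆ = 0) (x y : L) : ⁅τ x, y⁆ = ⁅x, τ y⁆ := by
  have hxy := h (x + y)
  rw [map_add, add_lie, lie_add, lie_add, h x, h y, zero_add, add_zero,
    ← lie_skew (τ y) x] at hxy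
  exact add_neg_eq_zero.mp hxy

theorem ad_map_eq_ad_comp {τ : L →ₗ[R] L} (h : ∀ x y, ⁅τ x, y⁆ = ⁅x, τ y⁆) (x : L) :
    ad R L (τ x) = ad R L x ∘ₗ τ :=
  LinearMap.ext (h x)

variable [Module.Free R L] [Module.Finite R L]

theorem killingForm_map_apply_eq_apply_map {τ : L →ₗ[R] L}
    (h : ∀ x y, ⁅τ x, y⁆ = ⁅x, τ y⁆) (htr : ∀ z, trace R L (ad R L z) = 0) (x y : L) :
    killingForm R L (τ x) y = killingForm R L x (τ y) := by
  have hjacobi : ad R L y ∘ₗ ad R L x ∘ₗ τ =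
      ad R L ⁅y, x⁆ ∘ₗ τ + ad R L x ∘ₗ ad R L y ∘ₗ τ := by
    ext z
    exact leibniz_lie y x (τ z)
  have hcomm : trace R L (ad R L ⁅y, x⁆ ∘ₗ τ) = 0 := by
    rw [← ad_map_eq_ad_comp h, htr]
  calc killingForm R L (τ x) y = trace R L ((ad R L x ∘ₗ τ) ∘ₗ ad R L y) := by
        rw [killingForm_apply_apply, ad_map_eq_ad_comp h]
    _ = trace R L (ad R L y ∘ₗ ad R L x ∘ₗ τ) := trace_comp_comm' _ _
    _ = trace R L (ad R L x ∘ₗ ad R L y ∘ₗ τ) := by rw [hjacobi, map_add, hcomm, zero_add]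
    _ = killingForm R L x (τ y) := by rw [killingForm_apply_apply, ad_map_eq_ad_comp h]

theorem map_lie_eq_lie_map [IsKilling R L] {τ : L →ₗ[R] L}
    (h : ∀ x y, ⁅τ x, y⁆ = ⁅x, τ y⁆) (htr : ∀ z, trace R L (ad R L z) = 0) (x y : L) :
    τ ⁅x, y⁆ = ⁅x, τ y⁆ := by
  apply LinearMap.ker_eq_bot.mp (IsKilling.ker_killingForm_eq_bot R L)
  ext z
  calc killingForm R L (τ ⁅x, y⁆) z = killingForm R L ⁅x, y⁆ (τ z) :=
        killingForm_map_apply_eq_apply_map h htr _ _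
    _ = killingForm R L x ⁅τ y, z⁆ := by rw [LieModule.traceForm_apply_lie_apply, h]
    _ = killingForm R L ⁅x, τ y⁆ z := (LieModule.traceForm_apply_lie_apply _ _ _ _ _ _).symm

end

theorem IsSimple.trace_ad_eq_zero {K L : Type*} [Field K] [LieRing L] [LieAlgebra K L]
    [FiniteDimensional K L] [IsSimple K L] (z : L) : trace K L (ad K L z) = 0 := by
  have hperfect : LieModule.lowerCentralSeries K L L 1 = ⊤ := by
    refine (IsSimple.eq_bot_or_eq_top _).resolve_left fun hbot ↦ IsSimple.non_abelian K (L := L) ?_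
    exact (LieModule.trivial_iff_lower_central_eq_bot K L L).mpr hbot
  exact LieModule.trace_toEnd_eq_zero_of_mem_lcs K L L le_rfl (hperfect ▸ LieSubmodule.mem_top z)

end LieAlgebra

theorem LieModule.exists_eq_smul_id_of_isIrreducible {K L M : Type*} [Field K] [IsAlgClosed K]
    [LieRing L] [LieAlgebra K L] [AddCommGroup M] [Module K M] [LieRingModule L M]
    [LieModule K L M] [FiniteDimensional K M] [IsIrreducible K L M] (f : M →ₗ⁅K,L⁆ M) :
    ∃ c : K, (f : M →ₗ[K] M) = c • LinearMap.id := by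
  have := nontrivial_of_isIrreducible K L M
  obtain ⟨c, hc⟩ := Module.End.exists_eigenvalue (f : M →ₗ[K] M)
  obtain ⟨v, hv⟩ := hc.exists_hasEigenvector
  set g := f - c • LieModuleHom.id
  have hker : g.ker = ⊤ := by
    refine (IsSimpleOrder.eq_bot_or_eq_top g.ker).resolve_left fun hbot ↦ hv.2 ?_
    rw [← LieSubmodule.mem_bot (R := K) (L := L), ← hbot, LieModuleHom.mem_ker]
    simpa [g, sub_eq_zero] using hv.apply_eq_smul
  refine ⟨c, LinearMap.ext fun m ↦ ?_⟩
  have hm : g m = 0 := LieModuleHom.mem_ker.mp (hker ▸ LieSubmodule.mem_top m)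
  simpa [g, sub_eq_zero] using hm

/-- (Benoist's Lemme 2.) If `σ` is a linear endomorphism of a finite-dimensional simple Lie
algebra over an algebraically closed field of characteristic `0` with `[σ(x), x] = 0` for all
`x`, then `σ` is a scalar multiple of the identity. -/
theorem centroid_like_is_scalar
    (K : Type*) [Field K] [IsAlgClosed K] [CharZero K]
    (L : Type*) [LieRing L] [LieAlgebra K L] [FiniteDimensional K L]
    [LieAlgebra.IsSimple K L]
    (σ : L →ₗ[K] L)
    (hσ : ∀ x : L, ⁅σ x, x⁆ = 0) :
    ∃ c : K, σ = c • LinearMap.id := by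
  have hsymm := LieAlgebra.lie_map_eq_lie_map_of_lie_map_self_eq_zero σ hσ
  have hcentroid := LieAlgebra.map_lie_eq_lie_map hsymm LieAlgebra.IsSimple.trace_ad_eq_zero
  exact LieModule.exists_eq_smul_id_of_isIrreducible (L := L) { σ with map_lie' := hcentroid _ _ }
end

section
/- The map sl(2)⊗tK[t] → sl(2)⊗tK[t] defined on basis elements by e₋⊗tⁿ ↦ e₋⊗(ntⁿ − tⁿ⁺¹), e₊⊗tⁿ ↦ e₊⊗(ntⁿ + tⁿ⁺¹), h⊗tⁿ ↦ h⊗ntⁿ (for all n ≥ 1) is a derivation of the current Lie algebra sl(2)⊗tK[t]. -/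
open TensorProduct Polynomial

/-- The non-unital commutative algebra `tK[t]` of polynomials with zero constant term. -/
def tPoly (K : Type*) [Field K] : NonUnitalSubalgebra K (Polynomial K) where
  carrier := {p | p.coeff 0 = 0}
  add_mem' := by intro a b ha hb; simp_all [Polynomial.coeff_add]
  zero_mem' := by simp
  mul_mem' := by intro a b ha hb; simp_all [Polynomial.mul_coeff_zero]
  smul_mem' := by intro c p hp; simp_all

/-- The element `tⁿ⁺¹` of `tK[t]`. -/
noncomputable def tp (K : Type*) [Field K] (n : ℕ) : tPoly K :=
  ⟨Polynomial.X ^ (n + 1), by show (Polynomial.X ^ (n+1) : Polynomial K).coeff 0 = 0; simp [Polynomial.coeff_X_pow]⟩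

/-
Write `δ = t d/dt` for the Euler operator on `tK[t]`, a derivation with `δ tⁿ = n tⁿ`.
The given map is `D = id ⊗ δ + ad h ⊗ t`, since `e₋, h, e₊` are eigenvectors of `ad h`
with eigenvalues `-1, 0, 1`. Both summands are derivations of the current algebra `L ⊗ A`
for any Lie algebra `L` and commutative algebra `A`: the first because `δ` is a derivation
of `A`, the second because `ad h` is a derivation of `L` and multiplication by `t` commutes
with multiplication in `A`.
-/

def IsLeibniz {K M : Type*} [CommSemiring K] [AddCommMonoid M] [Module K M]
    (B : M →ₗ[K] M →ₗ[K] M) (D : M →ₗ[K] M) : Prop :=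
  ∀ u v, D (B u v) = B (D u) v + B u (D v)

theorem IsLeibniz.add {K M : Type*} [CommSemiring K] [AddCommMonoid M] [Module K M]
    {B : M →ₗ[K] M →ₗ[K] M} {D₁ D₂ : M →ₗ[K] M}
    (h₁ : IsLeibniz B D₁) (h₂ : IsLeibniz B D₂) :
    IsLeibniz B (D₁ + D₂) := fun u v => by
  simp only [LinearMap.add_apply, map_add, h₁ u v, h₂ u v]
  abel

theorem TensorProduct.ext_basis_span {K M N P ι κ : Type*} [CommRing K] [AddCommGroup M]
    [Module K M] [AddCommGroup N] [Module K N] [AddCommGroup P] [Module K P]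
    (b : Module.Basis ι K M) {v : κ → N} (hv : Submodule.span K (Set.range v) = ⊤)
    {f g : M ⊗[K] N →ₗ[K] P} (h : ∀ i k, f (b i ⊗ₜ v k) = g (b i ⊗ₜ v k)) : f = g :=
  TensorProduct.ext <| b.ext fun i => LinearMap.ext_on_range hv fun k => h i k

namespace tPoly

variable (K : Type*) [Field K]

theorem mem_iff {p : K[X]} : p ∈ tPoly K ↔ p.coeff 0 = 0 := Iff.rfl

@[simp]
theorem coe_tp (n : ℕ) : (tp K n : K[X]) = X ^ (n + 1) := rfl

theorem span_range_tp : Submodule.span K (Set.range (tp K)) = ⊤ := by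
  refine Submodule.eq_top_iff'.mpr fun ⟨p, hp⟩ => ?_
  have hsum : (⟨p, hp⟩ : tPoly K) = ∑ n ∈ p.support, p.coeff n • tp K (n - 1) := by
    apply Subtype.ext
    push_cast
    conv_lhs => rw [p.as_sum_support]
    refine Finset.sum_congr rfl fun n hn => ?_
    have hn0 : n ≠ 0 := by rintro rfl; exact mem_support_iff.mp hn hp
    rw [coe_tp, Nat.sub_add_cancel (Nat.one_le_iff_ne_zero.mpr hn0), smul_X_eq_monomial]
  rw [hsum]
  exact Submodule.sum_mem _ fun n _ =>
    Submodule.smul_mem _ _ (Submodule.subset_span ⟨n - 1, rfl⟩)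

theorem tp_zero_mul_tp (n : ℕ) : tp K 0 * tp K n = tp K (n + 1) :=
  Subtype.ext (by simp [pow_succ, mul_comm])

noncomputable def euler : tPoly K →ₗ[K] tPoly K where
  toFun p := ⟨X * derivative (p : K[X]), by simp [mem_iff]⟩
  map_add' p q := Subtype.ext (by simp [mul_add])
  map_smul' c p := Subtype.ext (by simp)

theorem euler_tp (n : ℕ) : euler K (tp K n) = ((n : K) + 1) • tp K n := by
  apply Subtype.ext
  simp only [euler, LinearMap.coe_mk, AddHom.coe_mk, coe_tp, NonUnitalSubalgebra.coe_smul,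
    derivative_X_pow, smul_eq_C_mul]
  push_cast
  ring

theorem isLeibniz_euler : IsLeibniz (LinearMap.mul K (tPoly K)) (euler K) := fun p q =>
  Subtype.ext (by simp [euler]; ring)

end tPoly

theorem isLeibniz_of_tmul {K M N : Type*} [CommSemiring K] [AddCommMonoid M] [Module K M]
    [AddCommMonoid N] [Module K N] {B : (M ⊗[K] N) →ₗ[K] (M ⊗[K] N) →ₗ[K] (M ⊗[K] N)}
    (D : (M ⊗[K] N) →ₗ[K] (M ⊗[K] N))
    (h : ∀ (x y : M) (a c : N), D (B (x ⊗ₜ a) (y ⊗ₜ c)) =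
      B (D (x ⊗ₜ a)) (y ⊗ₜ c) + B (x ⊗ₜ a) (D (y ⊗ₜ c))) :
    IsLeibniz B D := by
  have : B.compr₂ D = B ∘ₗ D + B.compl₂ D :=
    TensorProduct.ext' fun x a => TensorProduct.ext' fun y c => by simpa using h x y a c
  exact fun u v => by simpa using LinearMap.congr_fun₂ this u v

section CurrentAlgebra

variable {K L A : Type*} [CommRing K] [LieRing L] [LieAlgebra K L]
  [NonUnitalCommRing A] [Module K A] [SMulCommClass K A A]
  {B : (L ⊗[K] A) →ₗ[K] (L ⊗[K] A) →ₗ[K] (L ⊗[K] A)}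

theorem isLeibniz_lTensor [IsScalarTower K A A]
    (hB : ∀ (x y : L) (a c : A), B (x ⊗ₜ[K] a) (y ⊗ₜ[K] c) = ⁅x, y⁆ ⊗ₜ[K] (a * c))
    {δ : A →ₗ[K] A} (hδ : IsLeibniz (LinearMap.mul K A) δ) :
    IsLeibniz B (δ.lTensor L) :=
  isLeibniz_of_tmul _ fun x y a c => by
    simp only [LinearMap.lTensor_tmul, hB, ← tmul_add]
    simpa using congrArg (⁅x, y⁆ ⊗ₜ[K] ·) (hδ a c)

theorem isLeibniz_map_mulLeft
    (hB : ∀ (x y : L) (a c : A), B (x ⊗ₜ[K] a) (y ⊗ₜ[K] c) = ⁅x, y⁆ ⊗ₜ[K] (a * c))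
    (φ : LieDerivation K L L) (s : A) :
    IsLeibniz B (TensorProduct.map (φ : L →ₗ[K] L) (LinearMap.mulLeft K s)) :=
  isLeibniz_of_tmul _ fun x y a c => by
    simp only [TensorProduct.map_tmul, hB, LinearMap.mulLeft_apply, LieDerivation.coeFn_coe,
      φ.apply_lie_eq_add, add_tmul, mul_assoc, mul_left_comm s a c]
    abel

end CurrentAlgebra

theorem sl2_tpoly_derivation_general
    (K : Type*) [Field K]
    (L : Type*) [LieRing L] [LieAlgebra K L]
    (Em H Ep : L)
    (b : Module.Basis (Fin 3) K L)
    (hb0 : b 0 = Em) (hb1 : b 1 = H) (hb2 : b 2 = Ep)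
    (rel1 : ⁅H, Em⁆ = - Em) (rel2 : ⁅H, Ep⁆ = Ep)
    (B : (L ⊗[K] tPoly K) →ₗ[K] (L ⊗[K] tPoly K) →ₗ[K] (L ⊗[K] tPoly K))
    (hB : ∀ (x y : L) (a c : tPoly K),
      B (x ⊗ₜ[K] a) (y ⊗ₜ[K] c) = ⁅x, y⁆ ⊗ₜ[K] (a * c))
    (D : (L ⊗[K] tPoly K) →ₗ[K] (L ⊗[K] tPoly K))
    (hDm : ∀ n : ℕ, D (Em ⊗ₜ[K] tp K n) =
      Em ⊗ₜ[K] (((n : K) + 1) • tp K n - tp K (n + 1)))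
    (hDp : ∀ n : ℕ, D (Ep ⊗ₜ[K] tp K n) =
      Ep ⊗ₜ[K] (((n : K) + 1) • tp K n + tp K (n + 1)))
    (hDh : ∀ n : ℕ, D (H ⊗ₜ[K] tp K n) = H ⊗ₜ[K] (((n : K) + 1) • tp K n)) :
    ∀ u v, D (B u v) = B (D u) v + B u (D v) := by
  have hD : D = (tPoly.euler K).lTensor L + TensorProduct.map
      (LieDerivation.ad K L H : L →ₗ[K] L) (LinearMap.mulLeft K (tp K 0)) := by
    refine TensorProduct.ext_basis_span b (tPoly.span_range_tp K) fun i n => ?_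
    fin_cases i
    · simp [hb0, hDm, rel1, tPoly.euler_tp, tPoly.tp_zero_mul_tp, tmul_sub, neg_tmul, tmul_smul]
      abel
    · simp [hb1, hDh, tPoly.euler_tp]
    · simp [hb2, hDp, rel2, tPoly.euler_tp, tPoly.tp_zero_mul_tp, tmul_add]
  rw [hD]
  exact (isLeibniz_lTensor hB (tPoly.isLeibniz_euler K)).add (isLeibniz_map_mulLeft hB _ _)

/-- The map `sl(2) ⊗ tK[t] → sl(2) ⊗ tK[t]` given on basis elements by
`e₋ ⊗ tⁿ ↦ e₋ ⊗ (n tⁿ - tⁿ⁺¹)`, `e₊ ⊗ tⁿ ↦ e₊ ⊗ (n tⁿ + tⁿ⁺¹)`, `h ⊗ tⁿ ↦ h ⊗ n tⁿ`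
is a derivation of the current Lie algebra `sl(2) ⊗ tK[t]`. -/
theorem sl2_tpoly_derivation
    (K : Type*) [Field K] [CharZero K]
    (L : Type*) [LieRing L] [LieAlgebra K L]
    (Em H Ep : L)
    (b : Module.Basis (Fin 3) K L)
    (hb0 : b 0 = Em) (hb1 : b 1 = H) (hb2 : b 2 = Ep)
    (rel1 : ⁅H, Em⁆ = - Em) (rel2 : ⁅H, Ep⁆ = Ep) (rel3 : ⁅Em, Ep⁆ = H)
    (B : (L ⊗[K] tPoly K) →ₗ[K] (L ⊗[K] tPoly K) →ₗ[K] (L ⊗[K] tPoly K))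
    (hB : ∀ (x y : L) (a c : tPoly K),
      B (x ⊗ₜ[K] a) (y ⊗ₜ[K] c) = ⁅x, y⁆ ⊗ₜ[K] (a * c))
    (D : (L ⊗[K] tPoly K) →ₗ[K] (L ⊗[K] tPoly K))
    (hDm : ∀ n : ℕ, D (Em ⊗ₜ[K] tp K n) =
      Em ⊗ₜ[K] (((n : K) + 1) • tp K n - tp K (n + 1)))
    (hDp : ∀ n : ℕ, D (Ep ⊗ₜ[K] tp K n) =
      Ep ⊗ₜ[K] (((n : K) + 1) • tp K n + tp K (n + 1)))
    (hDh : ∀ n : ℕ, D (H ⊗ₜ[K] tp K n) = H ⊗ₜ[K] (((n : K) + 1) • tp K n)) :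
    ∀ u v, D (B u v) = B (D u) v + B u (D v) :=
  sl2_tpoly_derivation_general K L Em H Ep b hb0 hb1 hb2 rel1 rel2 B hB D hDm hDp hDh
end

section
/- Every skew-symmetric cyclic bilinear form α on the non-unital algebra tK[t] (i.e. α(fg,h)=α(hf,g)) satisfies α(tⁱ,tʲ)=0 for all i,j ≥ 2 and α(tᵏ,t)=0 for all k ≥ 3; consequently the space of such forms is 1-dimensional, spanned by the form with α(t,t²) = 1, α(t²,t) = −1, and α(tⁱ,tʲ)=0 otherwise. -/
/-- A bilinear form on `tK[t]` is encoded by its values `α i j = α(tⁱ, tʲ)` on the basis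
`t, t², t³, …` (indices `i, j ≥ 1`).  Every skew-symmetric cyclic bilinear form `α` on `tK[t]`
(`α(ab,c) = α(ca,b)`) satisfies `α(tⁱ,tʲ) = 0` for `i, j ≥ 2` and `α(tᵏ,t) = 0` for `k ≥ 3`;
consequently the space of such forms is `1`-dimensional, spanned by the form with
`α(t,t²) = 1`, `α(t²,t) = -1`, and `α(tⁱ,tʲ) = 0` otherwise. -/
theorem skew_cyclic_forms_on_tKt
    (K : Type*) [Field K] [CharZero K]
    (α : ℕ → ℕ → K)
    (hskew : ∀ i j, 1 ≤ i → 1 ≤ j → α i j = - α j i)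
    (hcyc : ∀ a b c, 1 ≤ a → 1 ≤ b → 1 ≤ c → α (a + b) c = α (c + a) b) :
    (∀ i j, 2 ≤ i → 2 ≤ j → α i j = 0) ∧
    (∀ k, 3 ≤ k → α k 1 = 0) ∧
    (∀ i j, 1 ≤ i → 1 ≤ j →
      α i j = α 1 2 * (if (i, j) = (1, 2) then 1 else if (i, j) = (2, 1) then -1 else 0)) := by
  have key2 : ∀ i j, 2 ≤ i → 1 ≤ j → α i j = α (i+j-1) 1 := by
    intro i j hi hj
    obtain ⟨a, rfl⟩ : ∃ a, i = a + 1 := ⟨i-1, by omega⟩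
    have h := hcyc a j 1 (by omega) hj le_rfl
    rw [Nat.add_comm 1 a] at h
    rw [← h]
    congr 1
    omega
  have f0 : ∀ n, 3 ≤ n → α n 1 = 0 := by
    intro n hn
    have h1 := key2 2 (n-1) le_rfl (by omega)
    have h2 := key2 (n-1) 2 (by omega) (by norm_num)
    have h3 := hskew 2 (n-1) (by omega) (by omega)
    have e1 : 2 + (n-1) - 1 = n := by omega
    have e2 : (n-1) + 2 - 1 = n := by omega
    rw [e1] at h1; rw [e2] at h2
    have : (2:K) * α n 1 = 0 := by linear_combination h3 - h1 - h2
    simpa using this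
  refine ⟨?_, f0, ?_⟩
  · intro i j hi hj
    rw [key2 i j hi (by omega)]
    exact f0 _ (by omega)
  · intro i j hi hj
    rcases Nat.lt_or_ge i 2 with h1 | h1
    · have : i = 1 := by omega
      subst this
      rcases Nat.lt_or_ge j 3 with h2 | h2
      · interval_cases j
        · have := hskew 1 1 le_rfl le_rfl
          have h0 : α 1 1 = 0 := by linear_combination this/2
          simp [h0, Prod.ext_iff]
        · simp
      · have := hskew 1 j le_rfl (by omega)
        rw [this, f0 j h2]
        have hj2 : ¬ ((1,j) = ((1:ℕ),(2:ℕ))) := by simp; omega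
        have hj1 : ¬ ((1,j) = ((2:ℕ),(1:ℕ))) := by simp
        rw [if_neg hj2, if_neg hj1]
        simp
    · rw [key2 i j h1 hj]
      rcases Nat.lt_or_ge (i+j) 4 with h2 | h2
      · have hij : i = 2 ∧ j = 1 := by omega
        obtain ⟨rfl, rfl⟩ := hij
        have := hskew 1 2 le_rfl (by omega)
        norm_num
        linear_combination this
      · rw [f0 _ (by omega)]
        have hj2 : ¬ ((i,j) = ((1:ℕ),(2:ℕ))) := by simp; omega
        have hj1 : ¬ ((i,j) = ((2:ℕ),(1:ℕ))) := by simp; omega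
        rw [if_neg hj2, if_neg hj1]
        simp
end
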